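/- arXiv:1706.08688 — 5 statements merged into one kernel-verified Lean document; each statement's English description precedes it below -/
import Mathlib

section
/- Let f : R^n -> R be a function and \beta \ge 0 be such that x \mapsto f(x) + (\beta/2)|x|^2 is convex and \int e^f d\gamma_n = 1, where \gamma_n is the standard Gaussian measure on R^n. Then f(x) \le (n/2) \ln(1+\beta) + |x|^2/2 for all x in R^n. -/
open MeasureTheory Real Set

noncomputable def stdGaussian (n : ℕ) : Measure (EuclideanSpace ℝ (Fin n)) :=
  volume.withDensity (fun x => ENNReal.ofReal ((2 * π) ^ (-(n : ℝ) / 2) * Real.exp (-‖x‖ ^ 2 / 2)))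

noncomputable def Phibar (s : ℝ) : ℝ :=
  (Real.sqrt (2 * π))⁻¹ * ∫ x in Set.Ioi s, Real.exp (-x ^ 2 / 2)

/-!
For every `a < g x`, where `g = f + β/2 ‖·‖²`, the convex function `g` has an affine minorant
`⟪v, ·⟫ + c` taking the value `a` at `x`. Then `e^f ≥ exp (c + ⟪v, ·⟫ - β/2 ‖·‖²)`, whose Gaussian
integral is explicit: `(1 + β)^(-n/2) exp (c + ‖v‖² / (2 (1 + β)))`. As `∫ e^f dγₙ = 1`, this gives
`c + ‖v‖² / (2 (1 + β)) ≤ n/2 log (1 + β)`, and Young's inequality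
`⟪v, x⟫ ≤ ‖v‖² / (2 (1 + β)) + (1 + β)/2 ‖x‖²` bounds `a = ⟪v, x⟫ + c`.
-/

open scoped RealInnerProductSpace

theorem ConvexOn.exists_inner_add_le_of_lt {E : Type*} [NormedAddCommGroup E]
    [InnerProductSpace ℝ E] [FiniteDimensional ℝ E] {φ : E → ℝ} (hφ : ConvexOn ℝ univ φ)
    {x : E} {a : ℝ} (ha : a < φ x) :
    ∃ (v : E) (c : ℝ), (∀ y, ⟪v, y⟫ + c ≤ φ y) ∧ ⟪v, x⟫ + c = a := by
  obtain ⟨l, c, hle, heq⟩ := hφ.exists_affine_le_of_lt (𝕜 := ℝ) (mem_univ x) ha isClosed_univ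
    (hφ.continuousOn isOpen_univ).lowerSemicontinuousOn
  refine ⟨(InnerProductSpace.toDual ℝ E).symm l, c, fun y => ?_, ?_⟩
  · simpa using hle ⟨y, mem_univ y⟩
  · simpa using heq

-- The factor `1` matches the shape of `GaussianFourier.integral_cexp_neg_mul_sq_norm_add`.
lemma ofReal_exp_neg_mul_sq_norm_add_inner {V : Type*} [NormedAddCommGroup V]
    [InnerProductSpace ℝ V] (b : ℝ) (w v : V) :
    (rexp (-b * ‖v‖ ^ 2 + ⟪w, v⟫) : ℂ) = Complex.exp (-b * ‖v‖ ^ 2 + 1 * ⟪w, v⟫) := by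
  push_cast
  ring_nf

section GaussianIntegral

variable {V : Type*} [NormedAddCommGroup V] [InnerProductSpace ℝ V] [FiniteDimensional ℝ V]
  [MeasurableSpace V] [BorelSpace V] {b : ℝ}

theorem integrable_rexp_neg_mul_sq_norm_add_inner (hb : 0 < b) (w : V) :
    Integrable (fun v : V => rexp (-b * ‖v‖ ^ 2 + ⟪w, v⟫)) := by
  refine (GaussianFourier.integrable_cexp_neg_mul_sq_norm_add (b := b) hb 1 w).re.congr
    (.of_forall fun v => ?_)
  dsimp only
  rw [← ofReal_exp_neg_mul_sq_norm_add_inner]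
  exact Complex.ofReal_re _

theorem integral_rexp_neg_mul_sq_norm_add_inner (hb : 0 < b) (w : V) :
    ∫ v : V, rexp (-b * ‖v‖ ^ 2 + ⟪w, v⟫) =
      (π / b) ^ (Module.finrank ℝ V / 2 : ℝ) * rexp (‖w‖ ^ 2 / (4 * b)) := by
  rw [← Complex.ofReal_inj, ← integral_complex_ofReal]
  simp only [ofReal_exp_neg_mul_sq_norm_add_inner]
  rw [GaussianFourier.integral_cexp_neg_mul_sq_norm_add (by simpa using hb),
    Complex.ofReal_mul, Complex.ofReal_cpow (by positivity)]
  push_cast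
  ring_nf

end GaussianIntegral

noncomputable def stdGaussianPDF (n : ℕ) (x : EuclideanSpace ℝ (Fin n)) : ℝ :=
  (2 * π) ^ (-(n : ℝ) / 2) * rexp (-‖x‖ ^ 2 / 2)

section StdGaussian

variable {n : ℕ}

lemma stdGaussianPDF_nonneg (x : EuclideanSpace ℝ (Fin n)) : 0 ≤ stdGaussianPDF n x := by
  unfold stdGaussianPDF
  positivity

lemma stdGaussian_eq_withDensity :
    stdGaussian n = volume.withDensity fun x => ((stdGaussianPDF n x).toNNReal : ENNReal) :=
  rfl

lemma measurable_stdGaussianPDF : Measurable (stdGaussianPDF n) := by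
  unfold stdGaussianPDF
  fun_prop

theorem integral_stdGaussian (h : EuclideanSpace ℝ (Fin n) → ℝ) :
    ∫ x, h x ∂stdGaussian n = ∫ x, stdGaussianPDF n x * h x := by
  rw [stdGaussian_eq_withDensity,
    integral_withDensity_eq_integral_smul measurable_stdGaussianPDF.real_toNNReal]
  simp only [NNReal.smul_def, Real.coe_toNNReal _ (stdGaussianPDF_nonneg _), smul_eq_mul]

theorem integrable_stdGaussian_iff {h : EuclideanSpace ℝ (Fin n) → ℝ} :
    Integrable h (stdGaussian n) ↔ Integrable fun x => stdGaussianPDF n x * h x := by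
  rw [stdGaussian_eq_withDensity,
    integrable_withDensity_iff_integrable_smul measurable_stdGaussianPDF.real_toNNReal]
  simp only [NNReal.smul_def, Real.coe_toNNReal _ (stdGaussianPDF_nonneg _), smul_eq_mul]

lemma stdGaussianPDF_mul_exp_inner_sub (β : ℝ) (v x : EuclideanSpace ℝ (Fin n)) :
    stdGaussianPDF n x * rexp (⟪v, x⟫ - β / 2 * ‖x‖ ^ 2) =
      (2 * π) ^ (-(n : ℝ) / 2) * rexp (-((1 + β) / 2) * ‖x‖ ^ 2 + ⟪v, x⟫) := by
  rw [stdGaussianPDF, mul_assoc, ← Real.exp_add]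
  ring_nf

theorem integrable_exp_inner_sub_stdGaussian {β : ℝ} (hβ : -1 < β)
    (v : EuclideanSpace ℝ (Fin n)) :
    Integrable (fun x => rexp (⟪v, x⟫ - β / 2 * ‖x‖ ^ 2)) (stdGaussian n) := by
  simp only [integrable_stdGaussian_iff, stdGaussianPDF_mul_exp_inner_sub]
  exact (integrable_rexp_neg_mul_sq_norm_add_inner (by linarith) v).const_mul _

theorem integral_exp_inner_sub_stdGaussian {β : ℝ} (hβ : -1 < β)
    (v : EuclideanSpace ℝ (Fin n)) :
    ∫ x, rexp (⟪v, x⟫ - β / 2 * ‖x‖ ^ 2) ∂stdGaussian n =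
      (1 + β) ^ (-(n : ℝ) / 2) * rexp (‖v‖ ^ 2 / (2 * (1 + β))) := by
  have hs : 0 < 1 + β := by linarith
  simp only [integral_stdGaussian, stdGaussianPDF_mul_exp_inner_sub]
  rw [integral_const_mul, integral_rexp_neg_mul_sq_norm_add_inner (by positivity),
    finrank_euclideanSpace_fin, ← mul_assoc, neg_div, Real.rpow_neg (by positivity),
    Real.rpow_neg hs.le, ← Real.inv_rpow hs.le, inv_mul_eq_div,
    ← Real.div_rpow (by positivity) (by positivity)]
  congr 2
  · field_simp
  · ring

end StdGaussian

lemma real_inner_le_sq_norm_div_add {E : Type*} [NormedAddCommGroup E] [InnerProductSpace ℝ E]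
    {t : ℝ} (ht : 0 < t) (v x : E) :
    ⟪v, x⟫ ≤ ‖v‖ ^ 2 / (2 * t) + t / 2 * ‖x‖ ^ 2 := by
  have hsq : 0 ≤ (‖v‖ - t * ‖x‖) ^ 2 / (2 * t) := by positivity
  have hexpand : (‖v‖ - t * ‖x‖) ^ 2 / (2 * t) =
      ‖v‖ ^ 2 / (2 * t) + t / 2 * ‖x‖ ^ 2 - ‖v‖ * ‖x‖ := by
    field_simp
    ring
  linarith [real_inner_le_norm v x]

theorem add_sq_norm_div_le_log_of_inner_add_le {n : ℕ} {f : EuclideanSpace ℝ (Fin n) → ℝ}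
    {β : ℝ} (hβ : -1 < β) (hint : ∫ x, rexp (f x) ∂stdGaussian n = 1)
    {v : EuclideanSpace ℝ (Fin n)} {c : ℝ} (hle : ∀ y, ⟪v, y⟫ + c ≤ f y + β / 2 * ‖y‖ ^ 2) :
    c + ‖v‖ ^ 2 / (2 * (1 + β)) ≤ n / 2 * log (1 + β) := by
  have hmono : ∫ y, rexp c * rexp (⟪v, y⟫ - β / 2 * ‖y‖ ^ 2) ∂stdGaussian n ≤
      ∫ y, rexp (f y) ∂stdGaussian n :=
    integral_mono ((integrable_exp_inner_sub_stdGaussian hβ v).const_mul _)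
      (.of_integral_ne_zero (by rw [hint]; exact one_ne_zero))
      fun y => by rw [← Real.exp_add]; exact Real.exp_le_exp.2 (by linarith [hle y])
  rw [integral_const_mul, integral_exp_inner_sub_stdGaussian hβ, hint,
    Real.rpow_def_of_pos (by linarith), ← mul_assoc, ← Real.exp_add, ← Real.exp_add,
    Real.exp_le_one_iff] at hmono
  linarith

theorem pointwise_bound_semiconvex (n : ℕ) (f : EuclideanSpace ℝ (Fin n) → ℝ) (β : ℝ)
    (hβ : 0 ≤ β)
    (hconv : ConvexOn ℝ Set.univ (fun x => f x + β / 2 * ‖x‖ ^ 2))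
    (hint : ∫ x, Real.exp (f x) ∂(stdGaussian n) = 1) :
    ∀ x, f x ≤ (n : ℝ) / 2 * Real.log (1 + β) + ‖x‖ ^ 2 / 2 := by
  intro x₀
  suffices f x₀ + β / 2 * ‖x₀‖ ^ 2 ≤ n / 2 * log (1 + β) + (1 + β) / 2 * ‖x₀‖ ^ 2 by linarith
  refine le_of_forall_lt_imp_le_of_dense fun a ha => ?_
  obtain ⟨v, c, hle, rfl⟩ := hconv.exists_inner_add_le_of_lt ha
  have hminorant := add_sq_norm_div_le_log_of_inner_add_le (by linarith) hint hle
  have hyoung := real_inner_le_sq_norm_div_add (by linarith : (0 : ℝ) < 1 + β) v x₀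
  linarith
end

section
/- Let f : R^n -> R be a convex function with \int e^f d\gamma_n = 1, where \gamma_n is the standard Gaussian measure on R^n. Then f(x) \le |x|^2/2 for all x in R^n. -/
open MeasureTheory Real Set

/-! A convex function lies above a supporting affine function at any point `x₀`:
`f x ≥ f x₀ + ⟪v, x - x₀⟫`. Integrating the exponential of this minorant against `γ_n`, whose
moment generating function is `exp (‖v‖² / 2)`, gives `exp (f x₀ - ⟪v, x₀⟫ + ‖v‖² / 2) ≤ 1`,
that is `f x₀ ≤ ⟪v, x₀⟫ - ‖v‖² / 2 ≤ ‖x₀‖² / 2`. -/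

open scoped RealInnerProductSpace

theorem ConvexOn.exists_subgradient {E : Type*} [NormedAddCommGroup E] [NormedSpace ℝ E]
    {f : E → ℝ} (hf : ConvexOn ℝ univ f) (hcont : Continuous f) (x₀ : E) :
    ∃ L : StrongDual ℝ E, ∀ x, f x₀ + L (x - x₀) ≤ f x := by
  have hopen : IsOpen {p : E × ℝ | p.1 ∈ univ ∧ f p.1 < p.2} := by
    simpa using isOpen_lt (hcont.comp continuous_fst) continuous_snd
  obtain ⟨φ, hφ⟩ := geometric_hahn_banach_open_point hf.convex_strict_epigraph hopen
    (x := (x₀, f x₀)) (by simp)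
  set c := φ (0, 1)
  set ψ := φ.comp (ContinuousLinearMap.inl ℝ E ℝ)
  have hsplit (x : E) (t : ℝ) : φ (x, t) = ψ x + t * c := by
    rw [show (x, t) = ((x, 0) : E × ℝ) + t • ((0, 1) : E × ℝ) by simp, map_add, map_smul]
    rfl
  have hbelow (x : E) (t : ℝ) (ht : f x < t) : ψ x + t * c < ψ x₀ + f x₀ * c := by
    simpa only [hsplit] using hφ (x, t) ⟨mem_univ x, ht⟩
  have hc : c < 0 := by nlinarith [hbelow x₀ (f x₀ + 1) (by linarith)]
  refine ⟨(-c)⁻¹ • ψ, fun x => le_of_forall_gt_imp_ge_of_dense fun t ht => ?_⟩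
  have hL : -c * ((-c)⁻¹ • ψ) (x - x₀) = ψ x - ψ x₀ := by
    rw [smul_apply, smul_eq_mul, ← mul_assoc,
      mul_inv_cancel₀ (neg_ne_zero.2 hc.ne), one_mul, map_sub]
  nlinarith [hbelow x t ht]

theorem ConvexOn.exists_inner_subgradient {E : Type*} [NormedAddCommGroup E]
    [InnerProductSpace ℝ E] [FiniteDimensional ℝ E] {f : E → ℝ} (hf : ConvexOn ℝ univ f)
    (x₀ : E) : ∃ v : E, ∀ x, f x₀ + ⟪v, x - x₀⟫ ≤ f x := by
  obtain ⟨L, hL⟩ := hf.exists_subgradient (continuousOn_univ.1 (hf.continuousOn isOpen_univ)) x₀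
  exact ⟨(InnerProductSpace.toDual ℝ E).symm L, by simpa using hL⟩

theorem integral_stdGaussian_s2 (n : ℕ) (g : EuclideanSpace ℝ (Fin n) → ℝ) :
    ∫ x, g x ∂stdGaussian n = ∫ x, (2 * π) ^ (-(n : ℝ) / 2) * exp (-‖x‖ ^ 2 / 2) * g x := by
  rw [stdGaussian, integral_withDensity_eq_integral_toReal_smul (by fun_prop)
    (by simp)]
  congr 1 with x
  rw [ENNReal.toReal_ofReal (by positivity), smul_eq_mul]

theorem integral_gaussian_density (n : ℕ) :
    ∫ x : EuclideanSpace ℝ (Fin n), (2 * π) ^ (-(n : ℝ) / 2) * exp (-‖x‖ ^ 2 / 2) = 1 := by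
  have h := GaussianFourier.integral_rexp_neg_mul_sq_norm (V := EuclideanSpace ℝ (Fin n))
    (b := 1 / 2) (by norm_num)
  rw [finrank_euclideanSpace_fin] at h
  have hexp (x : EuclideanSpace ℝ (Fin n)) : -‖x‖ ^ 2 / 2 = -(1 / 2) * ‖x‖ ^ 2 := by ring
  simp_rw [integral_const_mul, hexp, h, neg_div, rpow_neg (by positivity : (0 : ℝ) ≤ 2 * π)]
  rw [div_div_eq_mul_div, div_one, mul_comm π, inv_mul_cancel₀ (by positivity)]

theorem integral_exp_inner_stdGaussian (n : ℕ) (v : EuclideanSpace ℝ (Fin n)) :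
    ∫ x, exp ⟪v, x⟫ ∂stdGaussian n = exp (‖v‖ ^ 2 / 2) := by
  -- completing the square
  have h (x : EuclideanSpace ℝ (Fin n)) :
      (2 * π) ^ (-(n : ℝ) / 2) * exp (-‖x‖ ^ 2 / 2) * exp ⟪v, x⟫
        = (2 * π) ^ (-(n : ℝ) / 2) * exp (-‖x - v‖ ^ 2 / 2) * exp (‖v‖ ^ 2 / 2) := by
    rw [mul_assoc, mul_assoc, ← exp_add, ← exp_add, norm_sub_sq_real, real_inner_comm]
    ring_nf
  simp_rw [integral_stdGaussian_s2, h, integral_mul_const]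
  rw [integral_sub_right_eq_self (fun x => (2 * π) ^ (-(n : ℝ) / 2) * exp (-‖x‖ ^ 2 / 2)) v,
    integral_gaussian_density, one_mul]

theorem pointwise_bound_convex (n : ℕ) (f : EuclideanSpace ℝ (Fin n) → ℝ)
    (hconv : ConvexOn ℝ Set.univ f)
    (hint : ∫ x, Real.exp (f x) ∂(stdGaussian n) = 1) :
    ∀ x, f x ≤ ‖x‖ ^ 2 / 2 := by
  intro x₀
  obtain ⟨v, hv⟩ := hconv.exists_inner_subgradient x₀
  have hfint : Integrable (fun x => exp (f x)) (stdGaussian n) := by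
    by_contra h
    simp [integral_undef h] at hint
  have hmgf : exp (f x₀ - ⟪v, x₀⟫ + ‖v‖ ^ 2 / 2) ≤ 1 := calc
    _ = ∫ x, exp (f x₀ - ⟪v, x₀⟫) * exp ⟪v, x⟫ ∂stdGaussian n := by
      rw [integral_const_mul, integral_exp_inner_stdGaussian, exp_add]
    _ ≤ ∫ x, exp (f x) ∂stdGaussian n := by
      refine integral_mono_of_nonneg (.of_forall fun x => by positivity) hfint
        (.of_forall fun x => ?_)
      dsimp only
      rw [← exp_add, exp_le_exp]
      linarith [hv x, inner_sub_right (𝕜 := ℝ) v x x₀]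
    _ = 1 := hint
  nlinarith [exp_le_one_iff.1 hmgf, norm_sub_sq_real v x₀, sq_nonneg ‖v - x₀‖]
end

section
/- Let f : R -> R and \beta \ge 0 be such that x \mapsto f(x) + (\beta/2)x^2 is convex and \int e^f d\gamma_1 = 1, where \gamma_1 is the standard Gaussian measure on R. Then for all t \ge 1, \gamma_1(\{x : f(x) \ge t\}) \le ((1+\beta)/\sqrt{2}) e^{-t}/\sqrt{t}. -/
open MeasureTheory Real Set

/-!
Convexity of `f + β x² / 2` gives, at every point `x₀`, a minorant `f ≥ a + c x - β x² / 2`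
touching `f` at `x₀`. Integrating its exponential against `γ₁` (a Gaussian integral) and using
`∫ e^f dγ₁ = 1` yields `x₀² ≥ 2 f(x₀) - log (1 + β)`. Hence `{f ≥ t}` lies in
`{|x| ≥ √(2t - log (1 + β))}`, and the Mills-ratio bound `γ₁{|x| ≥ s} ≤ 2 φ(s) / s` gives the claim
when `2t ≥ 1 + β`; when `2t < 1 + β`, Markov's inequality `γ₁{f ≥ t} ≤ e^{-t}` already suffices.
-/

open ProbabilityTheory Filter Topology

theorem ConvexOn.exists_add_mul_sub_le {g : ℝ → ℝ} {S : Set ℝ} (hg : ConvexOn ℝ S g) {x₀ : ℝ}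
    (hx₀ : x₀ ∈ interior S) : ∃ c : ℝ, ∀ y ∈ S, g x₀ + c * (y - x₀) ≤ g y := by
  refine ⟨derivWithin g (Ioi x₀) x₀, fun y hyS => ?_⟩
  rcases lt_trichotomy y x₀ with hy | rfl | hy
  · have := (hg.slope_le_leftDeriv_of_mem_interior hyS hx₀ hy).trans
      (hg.leftDeriv_le_rightDeriv_of_mem_interior hx₀)
    rw [slope_def_field, div_le_iff₀ (sub_pos.2 hy)] at this
    linarith
  · simp
  · have := hg.rightDeriv_le_slope_of_mem_interior hx₀ hyS hy
    rw [slope_def_field, le_div_iff₀ (sub_pos.2 hy)] at this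
    linarith

theorem integral_exp_neg_mul_sq_add_mul_add {b : ℝ} (hb : 0 < b) (c d : ℝ) :
    ∫ x, rexp (-b * x ^ 2 + c * x + d) = √(π / b) * rexp (d + c ^ 2 / (4 * b)) := by
  have hsq (x : ℝ) : rexp (-b * x ^ 2 + c * x + d)
      = rexp (-b * (x - c / (2 * b)) ^ 2) * rexp (d + c ^ 2 / (4 * b)) := by
    rw [← exp_add]
    congr 1
    field_simp
    ring
  simp_rw [hsq, integral_mul_const]
  rw [integral_sub_right_eq_self (fun x => rexp (-b * x ^ 2)), integral_gaussian]

theorem gaussianPDFReal_zero_one (x : ℝ) :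
    gaussianPDFReal 0 1 x = (√(2 * π))⁻¹ * rexp (-(1 / 2) * x ^ 2) := by
  simp [gaussianPDFReal, div_eq_inv_mul]

theorem integral_exp_add_mul_sub_sq_gaussianReal {β : ℝ} (hβ : -1 < β) (a c : ℝ) :
    ∫ x, rexp (a + c * x - β / 2 * x ^ 2) ∂gaussianReal 0 1
      = (√(1 + β))⁻¹ * rexp (a + c ^ 2 / (2 * (1 + β))) := by
  have h1β : 0 < 1 + β := by linarith
  have hpdf (x : ℝ) : gaussianPDFReal 0 1 x • rexp (a + c * x - β / 2 * x ^ 2)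
      = (√(2 * π))⁻¹ * rexp (-((1 + β) / 2) * x ^ 2 + c * x + a) := by
    rw [smul_eq_mul, gaussianPDFReal_zero_one, mul_assoc, ← exp_add]
    ring_nf
  simp_rw [integral_gaussianReal_eq_integral_smul one_ne_zero, hpdf, integral_const_mul]
  rw [integral_exp_neg_mul_sq_add_mul_add (by positivity),
    show π / ((1 + β) / 2) = 2 * π / (1 + β) by field_simp, sqrt_div' _ h1β.le,
    show 4 * ((1 + β) / 2) = 2 * (1 + β) by ring]
  have h2π : √(2 * π) ≠ 0 := by positivity
  field_simp

theorem two_mul_sub_log_le_sq_of_le {f : ℝ → ℝ} {β : ℝ} (hβ : -1 < β)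
    (hconv : ConvexOn ℝ univ (fun x => f x + β / 2 * x ^ 2))
    (hf : Integrable (fun x => rexp (f x)) (gaussianReal 0 1))
    (hint : ∫ x, rexp (f x) ∂gaussianReal 0 1 ≤ 1) {t x₀ : ℝ} (hx₀ : t ≤ f x₀) :
    2 * t - log (1 + β) ≤ x₀ ^ 2 := by
  have h1β : 0 < 1 + β := by linarith
  obtain ⟨c, hc⟩ := hconv.exists_add_mul_sub_le (x₀ := x₀) (by simp)
  set a := f x₀ + β / 2 * x₀ ^ 2 - c * x₀ with ha
  have hmin (y : ℝ) : a + c * y - β / 2 * y ^ 2 ≤ f y := by linarith [hc y (mem_univ y), ha]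
  have hle : (√(1 + β))⁻¹ * rexp (a + c ^ 2 / (2 * (1 + β))) ≤ 1 := by
    have hpos : 0 < (√(1 + β))⁻¹ * rexp (a + c ^ 2 / (2 * (1 + β))) := by positivity
    rw [← integral_exp_add_mul_sub_sq_gaussianReal hβ] at hpos ⊢
    -- the minorant is integrable because its (explicit) integral is nonzero
    exact (integral_mono (Integrable.of_integral_ne_zero hpos.ne') hf
      fun y => exp_le_exp.2 (hmin y)).trans hint
  have hlog : a + c ^ 2 / (2 * (1 + β)) ≤ log (1 + β) / 2 := by
    have hsqrt : √(1 + β) = rexp (log (1 + β) / 2) := by rw [exp_half, exp_log h1β]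
    rw [inv_mul_le_iff₀ (by positivity), mul_one, hsqrt] at hle
    exact exp_le_exp.1 hle
  have hsq : c ^ 2 / (2 * (1 + β)) - c * x₀ + (1 + β) / 2 * x₀ ^ 2
      = (c - (1 + β) * x₀) ^ 2 / (2 * (1 + β)) := by
    field_simp
    ring
  have hsq_nonneg : 0 ≤ (c - (1 + β) * x₀) ^ 2 / (2 * (1 + β)) := by positivity
  linarith [ha]

theorem integral_Ioi_mul_exp_neg_mul_sq {b : ℝ} (hb : 0 < b) (s : ℝ) :
    ∫ x in Ioi s, x * rexp (-b * x ^ 2) = rexp (-b * s ^ 2) / (2 * b) := by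
  have hderiv (x : ℝ) :
      HasDerivAt (fun x => -rexp (-b * x ^ 2) / (2 * b)) (x * rexp (-b * x ^ 2)) x := by
    refine (((hasDerivAt_pow 2 x).const_mul (-b)).exp.neg.div_const (2 * b)).congr_deriv ?_
    field_simp
    ring
  have hlim : Tendsto (fun x => -rexp (-b * x ^ 2) / (2 * b)) atTop (𝓝 (-0 / (2 * b))) :=
    (tendsto_exp_atBot.comp ((tendsto_pow_atTop two_ne_zero).const_mul_atTop_of_neg
      (neg_lt_zero.2 hb))).neg.div_const _
  rw [integral_Ioi_of_hasDerivAt_of_tendsto' (fun x _ => hderiv x)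
    (integrable_mul_exp_neg_mul_sq hb).integrableOn hlim]
  ring

theorem gaussianReal_real_Ici_le {s : ℝ} (hs : 0 < s) :
    (gaussianReal 0 1).real (Ici s) ≤ gaussianPDFReal 0 1 s / s := by
  rw [measureReal_def, gaussianReal_apply_eq_integral 0 one_ne_zero,
    ENNReal.toReal_ofReal
      (setIntegral_nonneg measurableSet_Ici fun x _ => gaussianPDFReal_nonneg 0 1 x)]
  calc ∫ x in Ici s, gaussianPDFReal 0 1 x
      ≤ ∫ x in Ici s, (√(2 * π))⁻¹ / s * (x * rexp (-(1 / 2) * x ^ 2)) := by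
        refine setIntegral_mono_on (integrable_gaussianPDFReal 0 1).integrableOn
          ((integrable_mul_exp_neg_mul_sq (by norm_num)).const_mul _).integrableOn
          measurableSet_Ici fun x (hx : s ≤ x) => ?_
        rw [gaussianPDFReal_zero_one, div_mul_eq_mul_div, mul_div_assoc]
        gcongr
        rw [le_div_iff₀ hs, mul_comm]
        gcongr
    _ = gaussianPDFReal 0 1 s / s := by
        rw [integral_const_mul, integral_Ici_eq_integral_Ioi,
          integral_Ioi_mul_exp_neg_mul_sq (by norm_num), gaussianPDFReal_zero_one]
        ring

theorem gaussianReal_real_setOf_le_abs_le {s : ℝ} (hs : 0 < s) :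
    (gaussianReal 0 1).real {x | s ≤ |x|} ≤ 2 * gaussianPDFReal 0 1 s / s := by
  have hsymm : (gaussianReal 0 1).real (Iic (-s)) = (gaussianReal 0 1).real (Ici s) := by
    have hmap : (gaussianReal 0 1).map (fun x : ℝ => -x) = gaussianReal 0 1 := by
      simpa using gaussianReal_map_neg (μ := 0) (v := 1)
    conv_lhs => rw [← hmap, map_measureReal_apply (by fun_prop) measurableSet_Iic]
    congr 1
    ext x
    simp
  have hunion : {x : ℝ | s ≤ |x|} = Iic (-s) ∪ Ici s := by
    ext x
    simp [le_abs', or_comm]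
  calc (gaussianReal 0 1).real {x | s ≤ |x|}
      ≤ (gaussianReal 0 1).real (Iic (-s)) + (gaussianReal 0 1).real (Ici s) := by
        rw [hunion]
        exact measureReal_union_le _ _
    _ ≤ 2 * gaussianPDFReal 0 1 s / s := by
        rw [hsymm, mul_div_assoc]
        linarith [gaussianReal_real_Ici_le hs]

theorem measureReal_le_exp_neg_of_integral_exp_le_one {Ω : Type*} [MeasurableSpace Ω]
    {μ : Measure Ω} [IsFiniteMeasure μ] {f : Ω → ℝ} (hf : Integrable (fun x => rexp (f x)) μ)
    (hint : ∫ x, rexp (f x) ∂μ ≤ 1) (t : ℝ) : μ.real {x | t ≤ f x} ≤ rexp (-t) := by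
  have h := measure_ge_le_exp_mul_mgf t zero_le_one (by simpa using hf)
  simp only [mgf, one_mul, neg_mul] at h
  exact h.trans (mul_le_of_le_one_right (exp_pos _).le hint)

theorem two_mul_gaussianPDFReal_div_le {β t s : ℝ} (hβ : 0 ≤ β) (ht : 1 + β ≤ 2 * t)
    (hs : 0 < s) (hs2 : s ^ 2 = 2 * t - log (1 + β)) :
    2 * gaussianPDFReal 0 1 s / s ≤ (1 + β) / √2 * (rexp (-t) / √t) := by
  have h1β : 0 < 1 + β := by linarith
  have hpdf : gaussianPDFReal 0 1 s = (√(2 * π))⁻¹ * (rexp (-t) * √(1 + β)) := by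
    rw [gaussianPDFReal_zero_one, hs2,
      show -(1 / 2) * (2 * t - log (1 + β)) = -t + log (1 + β) / 2 by ring,
      exp_add, exp_half, exp_log h1β]
  have hkey : 2 * √(1 + β) * √t ≤ (1 + β) * √π * s := by
    refine (pow_le_pow_iff_left₀ (by positivity) (by positivity) two_ne_zero).1 ?_
    have hlog : log (1 + β) ≤ β := by linarith [log_le_sub_one_of_pos h1β]
    rw [mul_pow, mul_pow, mul_pow, mul_pow, sq_sqrt h1β.le, sq_sqrt (by linarith),
      sq_sqrt pi_pos.le, hs2]
    have h2t : 2 * t ≤ (1 + β) * (2 * t - log (1 + β)) := by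
      nlinarith [mul_le_mul_of_nonneg_left hlog h1β.le, mul_le_mul_of_nonneg_left ht hβ]
    have h4t : 4 * t ≤ π * ((1 + β) * (2 * t - log (1 + β))) := by nlinarith [pi_gt_three]
    nlinarith [mul_le_mul_of_nonneg_left h4t h1β.le]
  rw [hpdf, sqrt_mul zero_le_two]
  field_simp
  rw [le_div_iff₀ (sqrt_pos.2 (by linarith))]
  linarith

theorem exp_neg_le_div_sqrt_two_mul {a t : ℝ} (ha : 0 ≤ a) (ht : 0 < t) (h : 2 * t ≤ a ^ 2) :
    rexp (-t) ≤ a / √2 * (rexp (-t) / √t) := by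
  have hsqrt : √2 * √t ≤ a := by
    rw [← sqrt_mul zero_le_two, ← sqrt_sq ha]
    exact sqrt_le_sqrt h
  calc rexp (-t) = rexp (-t) * 1 := (mul_one _).symm
    _ ≤ rexp (-t) * (a / (√2 * √t)) := by
        gcongr
        rwa [one_le_div (by positivity)]
    _ = a / √2 * (rexp (-t) / √t) := by ring

theorem deviation_dim1_semiconvex (f : ℝ → ℝ) (β : ℝ) (hβ : 0 ≤ β)
    (hconv : ConvexOn ℝ Set.univ (fun x => f x + β / 2 * x ^ 2))
    (hint : ∫ x, Real.exp (f x) ∂(ProbabilityTheory.gaussianReal 0 1) = 1) :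
    ∀ t : ℝ, 1 ≤ t →
      ProbabilityTheory.gaussianReal 0 1 {x | t ≤ f x}
        ≤ ENNReal.ofReal ((1 + β) / Real.sqrt 2 * (Real.exp (-t) / Real.sqrt t)) := by
  intro t ht
  have hf : Integrable (fun x => rexp (f x)) (gaussianReal 0 1) :=
    .of_integral_ne_zero (by simp [hint])
  rw [ENNReal.le_ofReal_iff_toReal_le (measure_ne_top _ _) (by positivity), ← measureReal_def]
  rcases lt_or_ge (2 * t) (1 + β) with hsmall | hlarge
  · exact (measureReal_le_exp_neg_of_integral_exp_le_one hf hint.le t).trans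
      (exp_neg_le_div_sqrt_two_mul (by linarith) (by linarith) (by nlinarith))
  · have hr : 0 < 2 * t - log (1 + β) := by
      linarith [log_le_sub_one_of_pos (by linarith : 0 < 1 + β)]
    calc (gaussianReal 0 1).real {x | t ≤ f x}
        ≤ (gaussianReal 0 1).real {x | √(2 * t - log (1 + β)) ≤ |x|} := by
          refine measureReal_mono fun x hx => ?_
          rw [mem_ofPred_eq, ← sqrt_sq_eq_abs]
          exact sqrt_le_sqrt (two_mul_sub_log_le_sq_of_le (by linarith) hconv hf hint.le hx)
      _ ≤ 2 * gaussianPDFReal 0 1 √(2 * t - log (1 + β)) / √(2 * t - log (1 + β)) :=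
          gaussianReal_real_setOf_le_abs_le (sqrt_pos.2 hr)
      _ ≤ (1 + β) / √2 * (rexp (-t) / √t) :=
          two_mul_gaussianPDFReal_div_le hβ hlarge (sqrt_pos.2 hr) (sq_sqrt hr.le)
end

section
/- Let \varphi : R -> R be a concave non-decreasing function with \varphi(u) \to +\infty as u \to +\infty and \varphi(u) \to -\infty as u \to -\infty, and suppose \int_{-\infty}^\infty e^u \overline{\Phi}(\varphi(u)) du = 1. Then \varphi(u) \ge \sqrt{2u} for all u \ge 0. -/
open MeasureTheory Real Set

open scoped ENNReal

lemma gauss_integrable : Integrable (fun x : ℝ => Real.exp (-x ^ 2 / 2)) := by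
  have h0 : (fun x : ℝ => Real.exp (-x ^ 2 / 2)) = fun x => Real.exp (-(1/2) * x ^ 2) := by
    funext x; ring_nf
  rw [h0]
  exact integrable_exp_neg_mul_sq (by norm_num)

lemma gauss_integral : ∫ x : ℝ, Real.exp (-x ^ 2 / 2) = Real.sqrt (2 * π) := by
  have h0 : (fun x : ℝ => Real.exp (-x ^ 2 / 2)) = fun x => Real.exp (-(1/2) * x ^ 2) := by
    funext x; ring_nf
  rw [h0, integral_gaussian]
  norm_num [div_div_eq_mul_div]
  ring_nf

lemma lintegral_exp_Iio (t : ℝ) :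
    ∫⁻ u in Set.Iio t, ENNReal.ofReal (Real.exp u) = ENNReal.ofReal (Real.exp t) := by
  rw [← ofReal_integral_eq_lintegral_ofReal
      ((integrableOn_exp_Iic t).mono_set Set.Iio_subset_Iic_self)
      (Filter.Eventually.of_forall fun x => (Real.exp_pos _).le)]
  rw [← integral_Iic_eq_integral_Iio, integral_exp_Iic]

lemma key_lintegral {a b : ℝ} (ha : 0 < a) :
    ∫⁻ u : ℝ, ENNReal.ofReal (Real.exp u * Phibar (a * u + b)) =
      ENNReal.ofReal (Real.exp (1 / (2 * a ^ 2) - b / a)) := by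
  have hc : (0:ℝ) < (Real.sqrt (2 * π))⁻¹ := by positivity
  have hgm : Measurable fun x : ℝ => ENNReal.ofReal (Real.exp (-x ^ 2 / 2)) := by
    measurability
  have hPh : ∀ s : ℝ, ENNReal.ofReal (Phibar s) =
      ENNReal.ofReal ((Real.sqrt (2 * π))⁻¹) *
        ∫⁻ x in Set.Ioi s, ENNReal.ofReal (Real.exp (-x ^ 2 / 2)) := by
    intro s
    rw [Phibar, ENNReal.ofReal_mul hc.le,
      ofReal_integral_eq_lintegral_ofReal gauss_integrable.integrableOn
        (Filter.Eventually.of_forall fun x => (Real.exp_pos _).le)]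
  set C := ENNReal.ofReal ((Real.sqrt (2 * π))⁻¹) with hC
  set F : ℝ → ℝ → ℝ≥0∞ := fun u x =>
    ({p : ℝ × ℝ | a * p.1 + b < p.2}.indicator
      (fun p => ENNReal.ofReal (Real.exp p.1) * ENNReal.ofReal (Real.exp (-p.2 ^ 2 / 2))) (u, x))
    with hF
  have hSmeas : MeasurableSet {p : ℝ × ℝ | a * p.1 + b < p.2} :=
    measurableSet_lt (by fun_prop) measurable_snd
  have hFmeas : Measurable (Function.uncurry F) := by
    apply Measurable.indicator _ hSmeas
    fun_prop
  have step1 : ∀ u : ℝ, ENNReal.ofReal (Real.exp u * Phibar (a * u + b)) =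
      C * ∫⁻ x, F u x := by
    intro u
    rw [ENNReal.ofReal_mul (Real.exp_pos _).le, hPh]
    have : (fun x => F u x) = (Set.Ioi (a * u + b)).indicator
        (fun x => ENNReal.ofReal (Real.exp u) * ENNReal.ofReal (Real.exp (-x ^ 2 / 2))) := by
      funext x
      by_cases h : a * u + b < x <;>
        simp [hF, Set.indicator, h, Set.mem_Ioi]
    rw [this, lintegral_indicator measurableSet_Ioi, lintegral_const_mul _ hgm]
    ring
  have step2 : ∀ x : ℝ, (∫⁻ u, F u x) =
      ENNReal.ofReal (Real.exp ((x - b) / a)) * ENNReal.ofReal (Real.exp (-x ^ 2 / 2)) := by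
    intro x
    have hset : ∀ u : ℝ, (a * u + b < x) ↔ u < (x - b) / a := by
      intro u
      rw [lt_div_iff₀ ha]
      constructor <;> intro h <;> nlinarith
    have : (fun u => F u x) = (Set.Iio ((x - b) / a)).indicator
        (fun u => ENNReal.ofReal (Real.exp u) * ENNReal.ofReal (Real.exp (-x ^ 2 / 2))) := by
      funext u
      by_cases h : u < (x - b) / a <;>
        simp [hF, Set.indicator, h, Set.mem_Iio, (hset u), Set.mem_setOf_eq]
    rw [this, lintegral_indicator measurableSet_Iio, lintegral_mul_const _ (by fun_prop),
      lintegral_exp_Iio]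
  have hmeas : Measurable fun u : ℝ => ∫⁻ x, F u x := by
    exact hFmeas.lintegral_prod_right' (ν := (volume : Measure ℝ))
  calc ∫⁻ u : ℝ, ENNReal.ofReal (Real.exp u * Phibar (a * u + b))
      = ∫⁻ u, C * ∫⁻ x, F u x := by simp_rw [step1]
    _ = C * ∫⁻ u, ∫⁻ x, F u x := by exact lintegral_const_mul _ hmeas
    _ = C * ∫⁻ x, ∫⁻ u, F u x := by rw [lintegral_lintegral_swap (hFmeas.aemeasurable (μ := ((volume : Measure ℝ).prod (volume : Measure ℝ))))]
    _ = C * ∫⁻ x, ENNReal.ofReal (Real.exp ((x - b) / a) * Real.exp (-x ^ 2 / 2)) := by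
        simp_rw [step2, ← ENNReal.ofReal_mul (Real.exp_pos _).le]
    _ = ENNReal.ofReal (Real.exp (1 / (2 * a ^ 2) - b / a)) := by
        have hptw : ∀ x : ℝ, Real.exp ((x - b) / a) * Real.exp (-x ^ 2 / 2) =
            Real.exp (1 / (2 * a ^ 2) - b / a) * Real.exp (-(x - 1 / a) ^ 2 / 2) := by
          intro x
          rw [← Real.exp_add, ← Real.exp_add]
          congr 1
          field_simp
          ring
        have hint2 : Integrable (fun x : ℝ => Real.exp (-(x - 1 / a) ^ 2 / 2)) :=
          gauss_integrable.comp_sub_right (1 / a)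
        simp_rw [hptw]
        rw [← ofReal_integral_eq_lintegral_ofReal (hint2.const_mul _)
            (Filter.Eventually.of_forall fun x => by positivity)]
        rw [integral_const_mul, integral_sub_right_eq_self (fun x : ℝ => Real.exp (-x ^ 2 / 2)),
          gauss_integral, hC, ← ENNReal.ofReal_mul (by positivity)]
        congr 1
        have hs : Real.sqrt (2 * π) ≠ 0 := by positivity
        field_simp
lemma Phibar_nonneg (s : ℝ) : 0 ≤ Phibar s := by
  unfold Phibar
  have h1 : 0 ≤ ∫ x in Set.Ioi s, Real.exp (-x ^ 2 / 2) :=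
    setIntegral_nonneg measurableSet_Ioi (fun x _ => (Real.exp_pos _).le)
  positivity

lemma Phibar_anti : Antitone Phibar := by
  intro s t hst
  unfold Phibar
  apply mul_le_mul_of_nonneg_left _ (by positivity)
  exact setIntegral_mono_set gauss_integrable.integrableOn
    (Filter.Eventually.of_forall fun x => (Real.exp_pos _).le)
    (HasSubset.Subset.eventuallyLE (Ioi_subset_Ioi hst))

lemma exists_tangent_line (φ : ℝ → ℝ) (hconc : ConcaveOn ℝ Set.univ φ) (u₀ : ℝ) :
    ∃ m : ℝ, ∀ u, φ u ≤ φ u₀ + m * (u - u₀) := by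
  have hanti := hconc.slope_anti (Set.mem_univ u₀)
  have hmem : ∀ u : ℝ, u ≠ u₀ → u ∈ Set.univ \ {u₀} := fun u h => ⟨Set.mem_univ _, h⟩
  set S : Set ℝ := slope φ u₀ '' Set.Ioi u₀ with hS
  have hbddmem : slope φ u₀ (u₀ - 1) ∈ upperBounds S := by
    rintro v ⟨u, hu, rfl⟩
    exact hanti (hmem _ (by norm_num)) (hmem _ (ne_of_gt hu)) (by simp at hu; linarith)
  have hne : S.Nonempty := ⟨_, ⟨u₀ + 1, by simp, rfl⟩⟩
  refine ⟨sSup S, fun u => ?_⟩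
  rcases lt_trichotomy u u₀ with h | h | h
  · have h1 : ∀ v ∈ S, v ≤ slope φ u₀ u := by
      rintro v ⟨w, hw, rfl⟩
      simp only [Set.mem_Ioi] at hw
      exact hanti (hmem u h.ne) (hmem w (by intro he; linarith [he ▸ hw])) (by linarith)
    have h2 := csSup_le hne h1
    rw [slope_def_field] at h2
    have h3 : u - u₀ < 0 := by linarith
    have h4 := (le_div_iff_of_neg h3).mp h2
    linarith
  · simp [h]
  · have h2 : slope φ u₀ u ≤ sSup S := le_csSup ⟨_, hbddmem⟩ ⟨u, h, rfl⟩
    rw [slope_def_field] at h2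
    have h3 : 0 < u - u₀ := by linarith
    have h4 := (div_le_iff₀ h3).mp h2
    linarith

theorem varphi_lower_bound (φ : ℝ → ℝ)
    (hconc : ConcaveOn ℝ Set.univ φ) (hmono : Monotone φ)
    (htop : Filter.Tendsto φ Filter.atTop Filter.atTop)
    (hbot : Filter.Tendsto φ Filter.atBot Filter.atBot)
    (hint : ∫ u : ℝ, Real.exp u * Phibar (φ u) = 1) :
    ∀ u : ℝ, 0 ≤ u → Real.sqrt (2 * u) ≤ φ u := by
  have hfint : Integrable (fun u : ℝ => Real.exp u * Phibar (φ u)) := by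
    by_contra h
    rw [integral_undef h] at hint
    exact one_ne_zero hint.symm
  have h1 : ∫⁻ u : ℝ, ENNReal.ofReal (Real.exp u * Phibar (φ u)) = 1 := by
    rw [← ofReal_integral_eq_lintegral_ofReal hfint
        (Filter.Eventually.of_forall fun u => mul_nonneg (Real.exp_pos _).le (Phibar_nonneg _)),
      hint, ENNReal.ofReal_one]
  intro u₀ hu₀
  obtain ⟨m, hm⟩ := exists_tangent_line φ hconc u₀
  have hmpos : 0 < m := by
    obtain ⟨u₁, hu₁, hu₁'⟩ :=
      ((Filter.eventually_gt_atTop u₀).and (htop.eventually_gt_atTop (φ u₀))).exists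
    have := hm u₁
    nlinarith
  set b := φ u₀ - m * u₀ with hb
  have hle : ∫⁻ u : ℝ, ENNReal.ofReal (Real.exp u * Phibar (m * u + b)) ≤ 1 := by
    rw [← h1]
    refine lintegral_mono fun u => ENNReal.ofReal_le_ofReal ?_
    refine mul_le_mul_of_nonneg_left (Phibar_anti ?_) (Real.exp_pos _).le
    have := hm u
    rw [hb]
    linarith
  rw [key_lintegral hmpos, ENNReal.ofReal_le_one] at hle
  have hK2 : 1 / (2 * m ^ 2) - b / m ≤ 0 := by
    by_contra h
    push_neg at h
    exact absurd hle (not_le.mpr (by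
      calc (1:ℝ) = Real.exp 0 := Real.exp_zero.symm
        _ < _ := Real.exp_lt_exp.mpr h))
  have hbge : 1 / (2 * m) ≤ b := by
    rw [sub_nonpos] at hK2
    have h5 := mul_le_mul_of_nonneg_right hK2 hmpos.le
    have e1 : 1 / (2 * m ^ 2) * m = 1 / (2 * m) := by
      field_simp
    have e2 : b / m * m = b := by field_simp
    rw [e1, e2] at h5
    exact h5
  have hmt : m * (1 / (2 * m)) = 1 / 2 := by field_simp
  have h5 : m * (1 / (2 * m)) * u₀ = u₀ / 2 := by rw [hmt]; ring
  have hfin : Real.sqrt (2 * u₀) ≤ m * u₀ + 1 / (2 * m) :=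
    calc Real.sqrt (2 * u₀) ≤ Real.sqrt ((m * u₀ + 1 / (2 * m)) ^ 2) := by
          apply Real.sqrt_le_sqrt
          nlinarith [sq_nonneg (m * u₀ - 1 / (2 * m))]
      _ = m * u₀ + 1 / (2 * m) := Real.sqrt_sq (by positivity)
  have hphi : φ u₀ = m * u₀ + b := by rw [hb]; ring
  linarith
end

section
/- Let f : R^n -> R be measurable with \int e^f d\gamma_n = 1, let \mu_f be the pushforward of \gamma_n by f, with cumulative distribution function F_f, and let T_f = F_f^{-1} \circ \Phi be the monotone rearrangement map transporting \gamma_1 onto \mu_f. If T_f is \kappa-semiconvex for some \kappa \ge 0 (i.e., x \mapsto T_f(x) + (\kappa/2)x^2 is convex), then for all u \ge (1/2)\log(1+\kappa), \gamma_n(\{f > u\}) \le \overline{\Phi}(\sqrt{2u - \log(1+\kappa)}). -/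
/-!
The monotone rearrangement `T` pushes `γ₁` forward to the law of `f`, so
`γₙ(f > u) = γ₁(T > u)` and `∫ e^T dγ₁ = ∫ e^f dγₙ = 1`. Semiconvexity puts `T` above a parabola
`a + p x - κ x² / 2` touching it at any given `x₀`; integrating the exponential of that parabola
against `γ₁` and comparing with `1` gives `T x₀ ≤ x₀² / 2 + log (1 + κ) / 2`. Hence `T ≤ u` up to
`s = √(2u - log (1 + κ))`, and since `T` is monotone, `{T > u}` lies in the Gaussian tail `(s, ∞)`.
-/
open MeasureTheory Real Set

open ProbabilityTheory Filter

namespace ProbabilityTheory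

variable {μ : Measure ℝ}

lemma continuous_cdf [IsProbabilityMeasure μ] [NullSingletonClass μ] : Continuous (cdf μ) := by
  refine continuous_iff_continuousAt.2 fun a => ?_
  have hjump : ENNReal.ofReal (cdf μ a - Function.leftLim (cdf μ) a) = 0 := by
    rw [← StieltjesFunction.measure_singleton, measure_cdf, measure_singleton]
  have hleft : Function.leftLim (cdf μ) a = cdf μ a :=
    le_antisymm ((monotone_cdf μ).leftLim_le le_rfl) (by simpa [sub_nonpos] using hjump)
  rw [(monotone_cdf μ).continuousAt_iff_leftLim_eq_rightLim, hleft, StieltjesFunction.rightLim_eq]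

lemma measure_cdf_le [IsProbabilityMeasure μ] (hcont : Continuous (cdf μ)) {c : ℝ} (hc0 : 0 ≤ c)
    (hc1 : c ≤ 1) :
    μ {x | cdf μ x ≤ c} = ENNReal.ofReal c := by
  rcases hc1.eq_or_lt with rfl | hc1
  · simp [cdf_le_one]
  set S := {x | cdf μ x ≤ c}
  rcases S.eq_empty_or_nonempty with hS | hS
  · have hc : c ≤ 0 := ge_of_tendsto' (tendsto_cdf_atBot μ) fun x =>
      (not_le.1 fun hx => (hS.subset hx : x ∈ (∅ : Set ℝ))).le
    simp [hS, le_antisymm hc hc0]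
  obtain ⟨t₀, ht₀⟩ := eventually_atTop.1 ((tendsto_cdf_atTop μ).eventually (lt_mem_nhds hc1))
  have hbdd : BddAbove S := ⟨t₀, fun x hx => not_lt.1 fun h => (ht₀ x h.le).not_ge hx⟩
  set b := sSup S
  have hb : b ∈ S := (isClosed_le hcont continuous_const).csSup_mem hS hbdd
  have hSb : S = Iic b :=
    Subset.antisymm (fun x hx => le_csSup hbdd hx) fun x hx => (monotone_cdf μ hx).trans hb
  have hcb : c ≤ cdf μ b :=
    ge_of_tendsto (hcont.continuousWithinAt (s := Ioi b)).tendsto <|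
      eventually_nhdsWithin_of_forall fun x hx =>
        (not_le.1 fun h => (not_le.2 (mem_Ioi.1 hx)) (le_csSup hbdd h)).le
  rw [hSb, ← ofReal_cdf, le_antisymm hb hcb]

lemma csInf_le_iff_le_cdf (ν : Measure ℝ) {p : ℝ} (hp : p ∈ Ioo 0 1) (u : ℝ) :
    sInf {t | p ≤ cdf ν t} ≤ u ↔ p ≤ cdf ν u := by
  obtain ⟨t₁, ht₁⟩ := eventually_atTop.1 ((tendsto_cdf_atTop ν).eventually (lt_mem_nhds hp.2))
  obtain ⟨t₀, ht₀⟩ := eventually_atBot.1 ((tendsto_cdf_atBot ν).eventually (gt_mem_nhds hp.1))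
  have hne : {t | p ≤ cdf ν t}.Nonempty := ⟨t₁, (ht₁ t₁ le_rfl).le⟩
  have hbdd : BddBelow {t | p ≤ cdf ν t} :=
    ⟨t₀, fun t ht => not_lt.1 fun h => (ht₀ t h.le).not_ge ht⟩
  refine ⟨fun h => ge_of_tendsto ((cdf ν).right_continuous u |>.mono Ioi_subset_Ici_self).tendsto
    (eventually_nhdsWithin_of_forall fun t ht => ?_), fun h => csInf_le hbdd h⟩
  obtain ⟨s, hs, hst⟩ := (csInf_lt_iff hbdd hne).1 (h.trans_lt ht)
  exact hs.trans (monotone_cdf ν hst.le)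

/-- The monotone rearrangement `(cdf ν)⁻¹ ∘ cdf μ`, with `(cdf ν)⁻¹` the generalized inverse. -/
noncomputable def monotoneRearrangement (μ ν : Measure ℝ) (x : ℝ) : ℝ :=
  sInf {t | cdf μ x ≤ cdf ν t}

variable (ν : Measure ℝ)

lemma monotoneRearrangement_le_iff (hμ : ∀ x, cdf μ x ∈ Ioo 0 1) (x u : ℝ) :
    monotoneRearrangement μ ν x ≤ u ↔ cdf μ x ≤ cdf ν u :=
  csInf_le_iff_le_cdf ν (hμ x) u

lemma monotone_monotoneRearrangement (hμ : ∀ x, cdf μ x ∈ Ioo 0 1) :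
    Monotone (monotoneRearrangement μ ν) := fun x y hxy =>
  (monotoneRearrangement_le_iff ν hμ x _).2 <| (monotone_cdf μ hxy).trans <|
    (monotoneRearrangement_le_iff ν hμ y _).1 le_rfl

lemma map_monotoneRearrangement [IsProbabilityMeasure μ] [IsProbabilityMeasure ν]
    (hcont : Continuous (cdf μ)) (hμ : ∀ x, cdf μ x ∈ Ioo 0 1) :
    μ.map (monotoneRearrangement μ ν) = ν := by
  refine Measure.ext_of_Iic _ _ fun u => ?_
  have hpre : monotoneRearrangement μ ν ⁻¹' Iic u = {x | cdf μ x ≤ cdf ν u} :=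
    ext fun x => monotoneRearrangement_le_iff ν hμ x u
  rw [Measure.map_apply (monotone_monotoneRearrangement ν hμ).measurable measurableSet_Iic, hpre,
    measure_cdf_le hcont (cdf_nonneg ν u) (cdf_le_one ν u), ofReal_cdf]

lemma cdf_gaussianReal_mem_Ioo (m : ℝ) {v : NNReal} (hv : v ≠ 0) (x : ℝ) :
    cdf (gaussianReal m v) x ∈ Ioo 0 1 := by
  have hpos : ∀ s : Set ℝ, volume s ≠ 0 → 0 < (gaussianReal m v).real s := fun s hs =>
    ENNReal.toReal_pos (mt (@gaussianReal_absolutelyContinuous' m v hv s) hs) (measure_ne_top _ _)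
  have hIic := hpos (Iic x) (by simp)
  have hIoi := hpos (Ioi x) (by simp)
  rw [← compl_Iic, probReal_compl_eq_one_sub measurableSet_Iic] at hIoi
  rw [cdf_eq_real]
  exact ⟨hIic, by linarith⟩

end ProbabilityTheory

instance (n : ℕ) : IsProbabilityMeasure (stdGaussian n) := by
  have hval : ∫ v : EuclideanSpace ℝ (Fin n), rexp (-‖v‖ ^ 2 / 2) = (2 * π) ^ ((n : ℝ) / 2) := by
    simpa [neg_div, div_eq_inv_mul, finrank_euclideanSpace_fin] using
      GaussianFourier.integral_rexp_neg_mul_sq_norm (V := EuclideanSpace ℝ (Fin n))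
        (b := 1 / 2) (by norm_num)
  have hint : Integrable fun v : EuclideanSpace ℝ (Fin n) => rexp (-‖v‖ ^ 2 / 2) :=
    Integrable.of_integral_ne_zero (by rw [hval]; positivity)
  constructor
  rw [_root_.stdGaussian, withDensity_apply _ MeasurableSet.univ, Measure.restrict_univ,
    ← ofReal_integral_eq_lintegral_ofReal (hint.const_mul _) (ae_of_all _ fun v => by positivity),
    integral_const_mul, hval, ← rpow_add (by positivity), neg_div, neg_add_cancel, rpow_zero,
    ENNReal.ofReal_one]

lemma gaussianReal_Ioi_eq_ofReal_Phibar (s : ℝ) :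
    gaussianReal 0 1 (Ioi s) = ENNReal.ofReal (Phibar s) := by
  rw [gaussianReal_apply_eq_integral 0 one_ne_zero, Phibar, ← integral_const_mul]
  simp [gaussianPDFReal]

lemma exp_quadratic_eq (a b : ℝ) {c : ℝ} (hc : c ≠ 0) (t : ℝ) :
    rexp (a + b * t - c * t ^ 2)
      = rexp (a + b ^ 2 / (4 * c)) * rexp (-c * (t - b / (2 * c)) ^ 2) := by
  rw [← Real.exp_add]
  congr 1
  field_simp
  ring

lemma integrable_exp_quadratic (a b : ℝ) {c : ℝ} (hc : 0 < c) :
    Integrable fun t : ℝ => rexp (a + b * t - c * t ^ 2) := by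
  simp_rw [exp_quadratic_eq a b hc.ne']
  exact ((integrable_exp_neg_mul_sq hc).comp_sub_right _).const_mul _

lemma integral_exp_quadratic (a b : ℝ) {c : ℝ} (hc : 0 < c) :
    ∫ t : ℝ, rexp (a + b * t - c * t ^ 2) = rexp (a + b ^ 2 / (4 * c)) * √(π / c) := by
  simp_rw [exp_quadratic_eq a b hc.ne', integral_const_mul,
    integral_sub_right_eq_self (fun t => rexp (-c * t ^ 2)), integral_gaussian]

lemma lintegral_exp_quadratic_gaussianReal (a b : ℝ) {k : ℝ} (hk : -1 < k) :
    ∫⁻ x, ENNReal.ofReal (rexp (a + b * x - k * x ^ 2 / 2)) ∂gaussianReal 0 1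
      = ENNReal.ofReal (rexp (a + b ^ 2 / (2 * (1 + k))) / √(1 + k)) := by
  have hk' : 0 < (1 + k) / 2 := by linarith
  have hdens : ∀ x, gaussianPDFReal 0 1 x * rexp (a + b * x - k * x ^ 2 / 2)
      = (√(2 * π))⁻¹ * rexp (a + b * x - (1 + k) / 2 * x ^ 2) := by
    intro x
    rw [gaussianPDFReal, mul_assoc, ← Real.exp_add]
    simp only [NNReal.coe_one, mul_one, sub_zero]
    congr 2
    ring
  rw [gaussianReal_of_var_ne_zero 0 one_ne_zero,
    lintegral_withDensity_eq_lintegral_mul _ (measurable_gaussianPDF 0 1) (by fun_prop)]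
  simp_rw [Pi.mul_apply, gaussianPDF, ← ENNReal.ofReal_mul (gaussianPDFReal_nonneg 0 1 _), hdens]
  rw [← ofReal_integral_eq_lintegral_ofReal ((integrable_exp_quadratic a b hk').const_mul _)
    (ae_of_all _ fun x => by positivity), integral_const_mul, integral_exp_quadratic a b hk']
  congr 1
  rw [show π / ((1 + k) / 2) = 2 * π / (1 + k) by field_simp, sqrt_div' _ (by linarith),
    show b ^ 2 / (4 * ((1 + k) / 2)) = b ^ 2 / (2 * (1 + k)) by ring]
  field_simp

lemma ConvexOn.add_rightDeriv_mul_sub_le {S : Set ℝ} {g : ℝ → ℝ} (hg : ConvexOn ℝ S g) {x y : ℝ}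
    (hx : x ∈ interior S) (hy : y ∈ S) : g x + derivWithin g (Ioi x) x * (y - x) ≤ g y := by
  rcases lt_trichotomy y x with hyx | rfl | hxy
  · have h := (hg.slope_le_leftDeriv_of_mem_interior hy hx hyx).trans
      (hg.leftDeriv_le_rightDeriv_of_mem_interior hx)
    rw [slope_def_field, div_le_iff₀ (by linarith)] at h
    linarith
  · simp
  · have h := hg.rightDeriv_le_slope_of_mem_interior hx hy hxy
    rw [slope_def_field, le_div_iff₀ (by linarith)] at h
    linarith

lemma le_of_semiconvex_of_lintegral_exp_le_one {T : ℝ → ℝ} {κ : ℝ} (hκ : -1 < κ)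
    (hsemi : ConvexOn ℝ univ fun x => T x + κ / 2 * x ^ 2)
    (hT : ∫⁻ x, ENNReal.ofReal (rexp (T x)) ∂gaussianReal 0 1 ≤ 1) (x₀ : ℝ) :
    T x₀ ≤ x₀ ^ 2 / 2 + log (1 + κ) / 2 := by
  set p := derivWithin (fun x => T x + κ / 2 * x ^ 2) (Ioi x₀) x₀
  set a := T x₀ + κ / 2 * x₀ ^ 2 - p * x₀ with ha
  have hline : ∀ x, a + p * x - κ * x ^ 2 / 2 ≤ T x := fun x => by
    have := hsemi.add_rightDeriv_mul_sub_le (x := x₀) (by simp) (mem_univ x)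
    linarith
  have hsqrt : 0 < √(1 + κ) := sqrt_pos.2 (by linarith)
  have hexp : rexp (a + p ^ 2 / (2 * (1 + κ))) ≤ √(1 + κ) := by
    rw [← div_le_one hsqrt, ← ENNReal.ofReal_le_one,
      ← lintegral_exp_quadratic_gaussianReal a p hκ]
    exact (lintegral_mono fun x => ENNReal.ofReal_le_ofReal (exp_le_exp.2 (hline x))).trans hT
  have hlog : a + p ^ 2 / (2 * (1 + κ)) ≤ log (1 + κ) / 2 := by
    rwa [← log_sqrt (by linarith), le_log_iff_exp_le hsqrt]
  have hamgm : p * x₀ ≤ p ^ 2 / (2 * (1 + κ)) + (1 + κ) * x₀ ^ 2 / 2 := by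
    have h1κ : 0 < 1 + κ := by linarith
    rw [div_add' _ _ _ (by positivity), le_div_iff₀ (by positivity)]
    nlinarith [sq_nonneg (p - (1 + κ) * x₀)]
  linarith

lemma gaussianReal_lt_le_ofReal_Phibar {T : ℝ → ℝ} (hT : Monotone T) {c : ℝ}
    (hbound : ∀ x, T x ≤ x ^ 2 / 2 + c / 2) {u : ℝ} (hu : c ≤ 2 * u) :
    gaussianReal 0 1 {x | u < T x} ≤ ENNReal.ofReal (Phibar √(2 * u - c)) := by
  set s := √(2 * u - c)
  have hTs : T s ≤ u := by
    have := hbound s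
    rw [sq_sqrt (by linarith)] at this
    linarith
  calc gaussianReal 0 1 {x | u < T x} ≤ gaussianReal 0 1 (Ioi s) :=
        measure_mono fun x hx => not_le.1 fun hxs => ((hT hxs).trans hTs).not_gt hx
    _ = ENNReal.ofReal (Phibar s) := gaussianReal_Ioi_eq_ofReal_Phibar s

theorem semiconvex_transport_deviation (n : ℕ) (f : EuclideanSpace ℝ (Fin n) → ℝ)
    (hmeas : Measurable f)
    (hint : ∫ x, Real.exp (f x) ∂(stdGaussian n) = 1)
    (F : ℝ → ℝ) (hF : F = fun t => (stdGaussian n {x | f x ≤ t}).toReal)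
    (T : ℝ → ℝ)
    (hT : T = fun u => sInf {t : ℝ | ((ProbabilityTheory.gaussianReal 0 1)
      (Set.Iic u)).toReal ≤ F t})
    (κ : ℝ) (hκ : 0 ≤ κ)
    (hsemi : ConvexOn ℝ Set.univ (fun x => T x + κ / 2 * x ^ 2)) :
    ∀ u : ℝ, 1 / 2 * Real.log (1 + κ) ≤ u →
      stdGaussian n {x | u < f x}
        ≤ ENNReal.ofReal (Phibar (Real.sqrt (2 * u - Real.log (1 + κ)))) := by
  intro u hu
  have : IsProbabilityMeasure ((stdGaussian n).map f) :=
    Measure.isProbabilityMeasure_map hmeas.aemeasurable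
  have : NullSingletonClass (gaussianReal 0 1) := nullSingletonClass_gaussianReal one_ne_zero
  have hγ := cdf_gaussianReal_mem_Ioo 0 one_ne_zero
  have hTν : T = monotoneRearrangement (gaussianReal 0 1) ((stdGaussian n).map f) := by
    subst hF hT
    funext x
    simp only [monotoneRearrangement, cdf_eq_real, measureReal_def,
      Measure.map_apply hmeas measurableSet_Iic]
    rfl
  have hTmono : Monotone T := hTν ▸ monotone_monotoneRearrangement _ hγ
  have hmap : (gaussianReal 0 1).map T = (stdGaussian n).map f :=
    hTν ▸ map_monotoneRearrangement _ continuous_cdf hγ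
  have hexp : ∫⁻ x, ENNReal.ofReal (rexp (T x)) ∂gaussianReal 0 1 = 1 :=
    calc ∫⁻ x, ENNReal.ofReal (rexp (T x)) ∂gaussianReal 0 1
        = ∫⁻ y, ENNReal.ofReal (rexp y) ∂(stdGaussian n).map f := by
          rw [← hmap, lintegral_map (by fun_prop) hTmono.measurable]
      _ = ∫⁻ x, ENNReal.ofReal (rexp (f x)) ∂stdGaussian n := lintegral_map (by fun_prop) hmeas
      _ = 1 := by
          rw [← ofReal_integral_eq_lintegral_ofReal (.of_integral_ne_zero (by simp [hint]))
            (ae_of_all _ fun x => (exp_pos _).le), hint, ENNReal.ofReal_one]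
  calc stdGaussian n {x | u < f x} = gaussianReal 0 1 {x | u < T x} := by
        change stdGaussian n (f ⁻¹' Ioi u) = gaussianReal 0 1 (T ⁻¹' Ioi u)
        rw [← Measure.map_apply hmeas measurableSet_Ioi, ← hmap,
          Measure.map_apply hTmono.measurable measurableSet_Ioi]
    _ ≤ _ := gaussianReal_lt_le_ofReal_Phibar hTmono
        (le_of_semiconvex_of_lintegral_exp_le_one (by linarith) hsemi hexp.le) (by linarith)
end
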